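/- arXiv:math/0607410 — 6 statements merged into one kernel-verified Lean document; each statement's English description precedes it below -/
import Mathlib

section
/- Generalized Heine theorem: Let μ be a finite Borel measure on ℝ such that ∫|x|^m dμ(x) < ∞ for all m ≥ 0, and let c_m = ∫ x^m dμ(x) be its moments. Let n ≥ 1 and k ≥ 1 be integers. Then ∫_{ℝ^n} Δ(x)^{2k} dμ(x₁)⋯dμ(x_n) = n! · Det(M), where M is the hypermatrix of order 2k and dimension n with entries M(i₁,…,i_{2k}) = c_{i₁+⋯+i_{2k}} for indices i₁,…,i_{2k} ∈ {0,…,n−1}. -/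
open MeasureTheory Nat

/-!
Leibniz's formula for the Vandermonde determinant writes `Δ(x)` as a signed sum of monomials
`∏ᵢ xᵢ ^ σ(i)`. Hence `Δ(x) ^ m` is a signed sum, over `m`-tuples of permutations
`σ₁, …, σₘ`, of the monomials `∏ᵢ xᵢ ^ (σ₁(i) + ⋯ + σₘ(i))`. Under the product measure
each monomial integrates to the product of moments `∏ᵢ c_{σ₁(i) + ⋯ + σₘ(i)}`, and the
resulting signed sum is `n!` times the hyperdeterminant of the Hankel hypermatrix of moments.
-/

/-- The Vandermonde product `Δ(x) = ∏_{i<j} (x_j - x_i)`. -/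
def vandermonde {n : ℕ} (x : Fin n → ℝ) : ℝ :=
  ∏ p ∈ Finset.univ.filter (fun p : Fin n × Fin n => p.1 < p.2), (x p.2 - x p.1)

/-- The hyperdeterminant of a hypermatrix of order `m` and dimension `n`:
`Det(M) = (1/n!) ∑_{σ₁,…,σ_m ∈ S_n} sign(σ₁)⋯sign(σ_m) ∏_i M(σ₁(i),…,σ_m(i))`. -/
noncomputable def hypDet {m n : ℕ} (M : (Fin m → Fin n) → ℝ) : ℝ :=
  (1 / (n ! : ℝ)) * ∑ σ : Fin m → Equiv.Perm (Fin n),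
    (∏ s, ((Equiv.Perm.sign (σ s) : ℤ) : ℝ)) * ∏ i, M fun s => σ s i

lemma vandermonde_eq_det {n : ℕ} (x : Fin n → ℝ) :
    vandermonde x = (Matrix.vandermonde x).det := by
  rw [Matrix.det_vandermonde, vandermonde, Finset.prod_filter, Fintype.prod_prod_type]
  simp_rw [← Finset.prod_filter, Finset.filter_lt_eq_Ioi]

lemma vandermonde_eq_sum_sign_mul_prod_pow {n : ℕ} (x : Fin n → ℝ) :
    vandermonde x =
      ∑ σ : Equiv.Perm (Fin n), ((Equiv.Perm.sign σ : ℤ) : ℝ) * ∏ i, x i ^ (σ i : ℕ) := by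
  rw [vandermonde_eq_det, ← Matrix.det_transpose, Matrix.det_apply']
  rfl

lemma vandermonde_pow_eq_sum {m n : ℕ} (x : Fin n → ℝ) :
    vandermonde x ^ m = ∑ σ : Fin m → Equiv.Perm (Fin n),
      (∏ s, ((Equiv.Perm.sign (σ s) : ℤ) : ℝ)) * ∏ i, x i ^ ∑ s, (σ s i : ℕ) := by
  rw [vandermonde_eq_sum_sign_mul_prod_pow, Fintype.sum_pow]
  refine Fintype.sum_congr _ _ fun σ => ?_
  rw [Finset.prod_mul_distrib, Finset.prod_comm (s := Finset.univ) (t := Finset.univ)]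
  simp_rw [Finset.prod_pow_eq_pow_sum]

lemma factorial_mul_hypDet {m n : ℕ} (M : (Fin m → Fin n) → ℝ) :
    n ! * hypDet M = ∑ σ : Fin m → Equiv.Perm (Fin n),
      (∏ s, ((Equiv.Perm.sign (σ s) : ℤ) : ℝ)) * ∏ i, M fun s => σ s i := by
  rw [hypDet, ← mul_assoc, mul_one_div_cancel (by positivity), one_mul]

theorem integral_vandermonde_pow {m n : ℕ} (μ : Measure ℝ) [SigmaFinite μ]
    (hmom : ∀ p : ℕ, Integrable (fun x : ℝ => x ^ p) μ) :
    ∫ x : Fin n → ℝ, vandermonde x ^ m ∂(Measure.pi fun _ => μ) =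
      n ! * hypDet (fun t : Fin m → Fin n => ∫ x : ℝ, x ^ (∑ s, (t s : ℕ)) ∂μ) := by
  simp_rw [vandermonde_pow_eq_sum, factorial_mul_hypDet]
  rw [integral_finsetSum _ fun σ _ => (Integrable.fintype_prod fun i => hmom _).const_mul _]
  refine Fintype.sum_congr _ _ fun σ => ?_
  rw [integral_const_mul, integral_fintype_prod_eq_prod (fun i x => x ^ ∑ s, (σ s i : ℕ))]

theorem generalized_heine_general (n k : ℕ)
    (μ : Measure ℝ) [IsFiniteMeasure μ]
    (hmom : ∀ m : ℕ, Integrable (fun x : ℝ => |x| ^ m) μ) :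
    (∫ x : Fin n → ℝ, vandermonde x ^ (2 * k) ∂(Measure.pi fun _ => μ)) =
      (n ! : ℝ) *
        hypDet (fun t : Fin (2 * k) → Fin n => ∫ x : ℝ, x ^ (∑ s, (t s : ℕ)) ∂μ) := by
  refine integral_vandermonde_pow μ fun p => (hmom p).mono' (by fun_prop) (.of_forall fun x => ?_)
  rw [Real.norm_eq_abs, abs_pow]

/-- Generalized Heine theorem: the `2k`-fold analogue of Heine's integral is
`n!` times the Hankel hyperdeterminant of the moments of `μ`. -/
theorem generalized_heine (n k : ℕ) (hn : 1 ≤ n) (hk : 1 ≤ k)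
    (μ : Measure ℝ) [IsFiniteMeasure μ]
    (hmom : ∀ m : ℕ, Integrable (fun x : ℝ => |x| ^ m) μ) :
    (∫ x : Fin n → ℝ, vandermonde x ^ (2 * k) ∂(Measure.pi fun _ => μ)) =
      (n ! : ℝ) *
        hypDet (fun t : Fin (2 * k) → Fin n => ∫ x : ℝ, x ^ (∑ s, (t s : ℕ)) ∂μ) :=
  generalized_heine_general n k μ hmom
end

section
/- Invariance of the hyperdeterminant under the multilinear group action: Let n ≥ 1 and k ≥ 1 be integers, let M be a hypermatrix of order 2k and dimension n, and let g⁽¹⁾,…,g⁽²ᵏ⁾ be n×n real matrices. Define the hypermatrix N by N(i₁,…,i_{2k}) = ∑_{j₁,…,j_{2k} ∈ {0,…,n−1}} g⁽¹⁾(i₁,j₁)⋯g⁽²ᵏ⁾(i_{2k},j_{2k}) · M(j₁,…,j_{2k}). Then Det(N) = det(g⁽¹⁾)⋯det(g⁽²ᵏ⁾) · Det(M). -/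
open Nat

/-- The Leibniz-type sum over permutations equals the determinant of the
column-reindexed matrix. -/
lemma det_sum_form {n : ℕ} (A : Matrix (Fin n) (Fin n) ℝ) (f : Fin n → Fin n) :
    ∑ τ : Equiv.Perm (Fin n), ((Equiv.Perm.sign τ : ℤ) : ℝ) * ∏ i, A (τ i) (f i)
      = (A.submatrix id f).det := by
  rw [Matrix.det_apply']
  rfl

/-- General form of the invariance (any order `m`). -/
theorem hypDet_mul (m n : ℕ) (M : (Fin m → Fin n) → ℝ)
    (g : Fin m → Matrix (Fin n) (Fin n) ℝ) :
    hypDet (fun t : Fin m → Fin n =>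
        ∑ j : Fin m → Fin n, (∏ s, g s (t s) (j s)) * M j) =
      (∏ s, (g s).det) * hypDet M := by
  unfold hypDet
  have step1 : ∀ σ : Fin m → Equiv.Perm (Fin n),
      (∏ i, ∑ j : Fin m → Fin n, (∏ s, g s (σ s i) (j s)) * M j)
        = ∑ J : Fin n → (Fin m → Fin n),
            (∏ s, ∏ i, g s (σ s i) (J i s)) * ∏ i, M (J i) := by
    intro σ
    rw [Finset.prod_univ_sum, Fintype.piFinset_univ]
    refine Finset.sum_congr rfl fun J _ => ?_
    rw [Finset.prod_mul_distrib, Finset.prod_comm]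
  have step2 :
      (∑ σ : Fin m → Equiv.Perm (Fin n),
          (∏ s, ((Equiv.Perm.sign (σ s) : ℤ) : ℝ)) *
            ∏ i, ∑ j : Fin m → Fin n, (∏ s, g s (σ s i) (j s)) * M j)
        = ∑ J : Fin n → (Fin m → Fin n),
            (∏ s, ((g s).submatrix id fun i => J i s).det) * ∏ i, M (J i) := by
    calc
      _ = ∑ σ : Fin m → Equiv.Perm (Fin n), ∑ J : Fin n → (Fin m → Fin n),
            (∏ s, ((Equiv.Perm.sign (σ s) : ℤ) : ℝ) * ∏ i, g s (σ s i) (J i s)) *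
              ∏ i, M (J i) := by
          refine Finset.sum_congr rfl fun σ _ => ?_
          rw [step1 σ, Finset.mul_sum]
          refine Finset.sum_congr rfl fun J _ => ?_
          rw [Finset.prod_mul_distrib]
          ring
      _ = ∑ J : Fin n → (Fin m → Fin n), ∑ σ : Fin m → Equiv.Perm (Fin n),
            (∏ s, ((Equiv.Perm.sign (σ s) : ℤ) : ℝ) * ∏ i, g s (σ s i) (J i s)) *
              ∏ i, M (J i) := Finset.sum_comm
      _ = _ := by
          refine Finset.sum_congr rfl fun J _ => ?_
          rw [← Finset.sum_mul]
          congr 1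
          calc
            _ = ∏ s, ∑ τ : Equiv.Perm (Fin n),
                  ((Equiv.Perm.sign τ : ℤ) : ℝ) * ∏ i, g s (τ i) (J i s) :=
              (Fintype.prod_sum fun (s : Fin m) (τ : Equiv.Perm (Fin n)) =>
                ((Equiv.Perm.sign τ : ℤ) : ℝ) * ∏ i, g s (τ i) (J i s)).symm
            _ = _ := Finset.prod_congr rfl fun s _ => det_sum_form (g s) (fun i => J i s)
  rw [step2]
  -- reindex the sum over `J` by tuples of permutations
  set e : (Fin m → Equiv.Perm (Fin n)) → (Fin n → (Fin m → Fin n)) :=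
    fun π i s => π s i with he
  have einj : Function.Injective e := by
    intro π π' h
    funext s
    apply Equiv.ext
    intro i
    exact congrFun (congrFun h i) s
  have hvanish : ∀ J ∈ Finset.univ,
      J ∉ Finset.image e Finset.univ →
      (∏ s, ((g s).submatrix id fun i => J i s).det) * ∏ i, M (J i) = 0 := by
    intro J _ hJ
    have : ∃ s, ¬ Function.Injective fun i => J i s := by
      by_contra hc
      push_neg at hc
      have hbij : ∀ s, Function.Bijective fun i => J i s :=
        fun s => Finite.injective_iff_bijective.mp (hc s)
      apply hJ
      refine Finset.mem_image.mpr ⟨fun s => Equiv.ofBijective _ (hbij s),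
        Finset.mem_univ _, ?_⟩
      rfl
    obtain ⟨s, hs⟩ := this
    rw [Function.not_injective_iff] at hs
    obtain ⟨i, i', hii, hne⟩ := hs
    have hdet : ((g s).submatrix id fun i => J i s).det = 0 := by
      apply Matrix.det_zero_of_column_eq hne
      intro p
      simp [Matrix.submatrix, hii]
    rw [Finset.prod_eq_zero (Finset.mem_univ s) hdet, zero_mul]
  rw [← Finset.sum_subset (Finset.subset_univ (Finset.image e Finset.univ)) hvanish,
    Finset.sum_image (fun π _ π' _ h => einj h)]
  have hterm : ∀ π : Fin m → Equiv.Perm (Fin n),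
      (∏ s, ((g s).submatrix id fun i => e π i s).det)
        = (∏ s, ((Equiv.Perm.sign (π s) : ℤ) : ℝ)) * ∏ s, (g s).det := by
    intro π
    rw [← Finset.prod_mul_distrib]
    refine Finset.prod_congr rfl fun s _ => ?_
    have : (fun i => e π i s) = ⇑(π s) := rfl
    rw [this, Matrix.det_permute' (π s) (g s)]
    try norm_num
  rw [Finset.mul_sum, Finset.mul_sum, Finset.mul_sum]
  refine Finset.sum_congr rfl fun π _ => ?_
  rw [hterm π]
  try ring

/-- Invariance of the hyperdeterminant under the multilinear action of
`2k` copies of `GLₙ`: `Det((g⁽¹⁾ ⊗ ⋯ ⊗ g⁽²ᵏ⁾)·M) = det(g⁽¹⁾) ⋯ det(g⁽²ᵏ⁾) Det(M)`. -/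
theorem hypDet_invariance (n k : ℕ) (hn : 1 ≤ n) (hk : 1 ≤ k)
    (M : (Fin (2 * k) → Fin n) → ℝ)
    (g : Fin (2 * k) → Matrix (Fin n) (Fin n) ℝ) :
    hypDet (fun t : Fin (2 * k) → Fin n =>
        ∑ j : Fin (2 * k) → Fin n, (∏ s, g s (t s) (j s)) * M j) =
      (∏ s, (g s).det) * hypDet M := by
  exact hypDet_mul (2 * k) n M g
end

section
/- Vanishing of odd-order hyperdeterminants: Let m ≥ 1 be an odd integer and let n ≥ 2. Then for every hypermatrix M of order m and dimension n, Det(M) = 0. -/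
open Nat

/-- Vanishing of odd-order hyperdeterminants: if `m` is odd and `n ≥ 2`,
then every hypermatrix of order `m` and dimension `n` has zero hyperdeterminant. -/
theorem hypDet_odd_order_eq_zero (m n : ℕ) (hm : Odd m) (hm1 : 1 ≤ m) (hn : 2 ≤ n)
    (M : (Fin m → Fin n) → ℝ) :
    hypDet M = 0 := by
  have h01 : (⟨0, by omega⟩ : Fin n) ≠ ⟨1, by omega⟩ := by
    simp [Fin.ext_iff]
  set τ : Equiv.Perm (Fin n) := Equiv.swap ⟨0, by omega⟩ ⟨1, by omega⟩ with hτ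
  have hsτ : (Equiv.Perm.sign τ : ℤ) = -1 := by
    simp [hτ, Equiv.Perm.sign_swap h01]
  set f : (Fin m → Equiv.Perm (Fin n)) → ℝ := fun σ =>
    (∏ s, ((Equiv.Perm.sign (σ s) : ℤ) : ℝ)) * ∏ i, M fun s => σ s i with hf
  set S : ℝ := ∑ σ : Fin m → Equiv.Perm (Fin n), f σ with hS
  have key : S = -S := by
    have := Fintype.sum_equiv
      (Equiv.arrowCongr (Equiv.refl (Fin m)) (Equiv.mulRight τ))
      (fun σ => -(f σ)) f ?_
    · rw [Finset.sum_neg_distrib] at this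
      rw [hS]; linarith
    · intro σ
      simp only [hf, Equiv.arrowCongr_apply, Equiv.refl_symm, Equiv.coe_refl,
        Equiv.coe_mulRight, Function.comp]
      have h1 : (∏ s, ((Equiv.Perm.sign (σ s * τ) : ℤ) : ℝ)) =
          -∏ s, ((Equiv.Perm.sign (σ s) : ℤ) : ℝ) := by
        have : ∀ s : Fin m, ((Equiv.Perm.sign (σ s * τ) : ℤ) : ℝ) =
            ((Equiv.Perm.sign (σ s) : ℤ) : ℝ) * (-1) := by
          intro s
          rw [map_mul]
          push_cast [hsτ]
          ring
        rw [Finset.prod_congr rfl (fun s _ => this s), Finset.prod_mul_distrib]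
        rcases hm with ⟨k, hk⟩
        simp [Finset.prod_const, hk, pow_succ, pow_mul]
      have h2 : (∏ i, M fun s => (σ s * τ) i) = ∏ i, M fun s => σ s i := by
        have := Equiv.prod_comp τ (fun i => M fun s => σ s i)
        simpa using this
      simp only [id_eq]
      rw [h1, h2]
      ring
  have hS0 : S = 0 := by linarith
  simp [hypDet, ← hf, ← hS, hS0]
end

section
/- Minor summation formula for hyperdeterminants: Let n ≥ 1 and k ≥ 1 be integers and let M, N be hypermatrices of order 2k and dimension n. Then Det(M + N) = ∑_{r=0}^n ∑_{(I,J) ∈ 𝔠ʳ} ε(I,J) · Det(M[I]) · Det(N[J]), where 𝔠ʳ is the set of pairs of 2k-tuples I = (I₁,…,I_{2k}), J = (J₁,…,J_{2k}) of subsets of {0,…,n−1} such that for each s, I_s and J_s are complementary with |I_s| = r and |J_s| = n − r; M[I] is the hypermatrix of order 2k and dimension r whose s-th index slot is restricted to I_s enumerated in increasing order (similarly N[J] has dimension n − r); and ε(I,J) = ∏_{s=1}^{2k} sign(σ_s), where σ_s is the permutation of {0,…,n−1} listing first the elements of I_s in increasing order and then those of J_s in increasing order. -/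
/-!
Expanding `∏ i, (M + N)(σ · i)` splits `n! Det(M + N)` into one signed sum over tuples of
permutations per set `S` of indices at which `M` is chosen. Because the order is even,
multiplying every `σ s` on the right by the same permutation leaves the signed sum unchanged, so
every `S` with `|S| = r` contributes as much as the first `r` indices. Writing each `σ s` uniquely
as `splitPerm (I s) * (τ s ⊕ ρ s)` factors that contribution as
`ε(I) · r! Det(M[I]) · (n - r)! Det(N[J])`, and `C(n, r) · r! · (n - r)! = n!`.
-/

open Nat

/-- The permutation of `{0,…,n-1}` listing first the elements of `A` in
increasing order and then those of its complement in increasing order. -/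
def splitPerm {n r : ℕ} (A : Finset (Fin n)) (hA : A.card = r) : Equiv.Perm (Fin n) :=
  ((finCongr (by
      have h : r ≤ n := by simpa [hA] using A.card_le_univ
      omega : n = r + (n - r))).trans
    finSumFinEquiv.symm).trans <|
  ((Equiv.sumCongr (A.orderIsoOfFin hA).toEquiv
      ((Aᶜ).orderIsoOfFin (by simp [Finset.card_compl, hA])).toEquiv).trans
    ((Equiv.sumCongr (Equiv.refl _)
      (Equiv.subtypeEquivRight (fun x => Finset.mem_compl))).trans
    (Equiv.sumCompl (· ∈ A))))

/-- The minor `M[I]` of a hypermatrix `M`, where the `s`-th index slot is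
restricted to the subset `I s` (of cardinality `r`) enumerated increasingly. -/
def hypMinor {m n r : ℕ} (M : (Fin m → Fin n) → ℝ)
    (I : Fin m → Finset (Fin n)) (hI : ∀ s, (I s).card = r) :
    (Fin m → Fin r) → ℝ :=
  fun t => M fun s => ((I s).orderIsoOfFin (hI s) (t s) : Fin n)

open Equiv Finset

section SignedPermSum

variable {R : Type*} [CommRing R] {m : ℕ} {α : Type*} [Fintype α] [DecidableEq α]

noncomputable def signedPermSum (F : (Fin m → Perm α) → R) : R :=
  ∑ σ : Fin m → Perm α, (∏ s, ((Perm.sign (σ s) : ℤ) : R)) * F σ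

lemma signedPermSum_sum {ι : Type*} (t : Finset ι) (F : ι → (Fin m → Perm α) → R) :
    signedPermSum (fun σ => ∑ i ∈ t, F i σ) = ∑ i ∈ t, signedPermSum (F i) := by
  simp only [signedPermSum, Finset.mul_sum]
  exact Finset.sum_comm

lemma signedPermSum_comp_mul_right (hm : Even m) (π : Perm α) (F : (Fin m → Perm α) → R) :
    signedPermSum (fun σ => F fun s => σ s * π) = signedPermSum F := by
  have hπ : Perm.sign π ^ m = 1 := by
    rw [Int.units_pow_eq_pow_mod_two, Nat.even_iff.mp hm, pow_zero]
  unfold signedPermSum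
  rw [← (Equiv.piCongrRight fun _ => Equiv.mulRight π⁻¹).sum_comp]
  refine Fintype.sum_congr _ _ fun σ => ?_
  have hsign : ∏ s, Perm.sign (σ s * π⁻¹) = ∏ s, Perm.sign (σ s) := by
    simp [Finset.prod_mul_distrib, hπ]
  simp only [Equiv.piCongrRight_apply, Equiv.coe_mulRight, Pi.map_apply, inv_mul_cancel_right]
  congr 1
  exact_mod_cast congrArg (fun u : ℤˣ => ((u : ℤ) : R)) hsign

end SignedPermSum

lemma hypDet_eq_signedPermSum {m n : ℕ} (M : (Fin m → Fin n) → ℝ) :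
    hypDet M = (1 / (n ! : ℝ)) * signedPermSum fun σ => ∏ i, M fun s => σ s i :=
  rfl

section BlockPerm

variable {n r : ℕ} (h : r ≤ n)

def finSumFinSubEquiv : Fin r ⊕ Fin (n - r) ≃ Fin n :=
  finSumFinEquiv.trans (finCongr (by omega))

def blockPerm (τ : Perm (Fin r)) (ρ : Perm (Fin (n - r))) : Perm (Fin n) :=
  (finSumFinSubEquiv h).permCongr (Perm.sumCongr τ ρ)

@[simp]
lemma blockPerm_apply_inl (τ : Perm (Fin r)) (ρ : Perm (Fin (n - r))) (j : Fin r) :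
    blockPerm h τ ρ (finSumFinSubEquiv h (.inl j)) = finSumFinSubEquiv h (.inl (τ j)) := by
  simp [blockPerm, Equiv.permCongr_apply]

@[simp]
lemma blockPerm_apply_inr (τ : Perm (Fin r)) (ρ : Perm (Fin (n - r))) (j : Fin (n - r)) :
    blockPerm h τ ρ (finSumFinSubEquiv h (.inr j)) = finSumFinSubEquiv h (.inr (ρ j)) := by
  simp [blockPerm, Equiv.permCongr_apply]

lemma sign_blockPerm (τ : Perm (Fin r)) (ρ : Perm (Fin (n - r))) :
    Perm.sign (blockPerm h τ ρ) = Perm.sign τ * Perm.sign ρ := by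
  rw [blockPerm, Perm.sign_permCongr, Perm.sign_sumCongr]

lemma blockPerm_injective :
    Function.Injective fun p : Perm (Fin r) × Perm (Fin (n - r)) => blockPerm h p.1 p.2 :=
  (Equiv.injective _).comp Perm.sumCongrHom_injective

@[simp]
lemma splitPerm_apply_inl {A : Finset (Fin n)} (hA : A.card = r) (j : Fin r) :
    splitPerm A hA (finSumFinSubEquiv h (.inl j)) = A.orderIsoOfFin hA j := by
  simp [splitPerm, finSumFinSubEquiv]

@[simp]
lemma splitPerm_apply_inr {A : Finset (Fin n)} (hA : A.card = r) (j : Fin (n - r)) :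
    splitPerm A hA (finSumFinSubEquiv h (.inr j)) =
      Aᶜ.orderIsoOfFin (by simp [Finset.card_compl, hA]) j := by
  simp [splitPerm, finSumFinSubEquiv]

end BlockPerm

section CosetDecomposition

variable {n r : ℕ} (h : r ≤ n)

/-- `A` is recovered as the image of the first `r` indices, after which `blockPerm τ ρ` is
determined. -/
lemma splitPerm_mul_blockPerm_injective :
    Function.Injective fun x : {A : Finset (Fin n) // A.card = r} ×
        Perm (Fin r) × Perm (Fin (n - r)) =>
      splitPerm x.1.1 x.1.2 * blockPerm h x.2.1 x.2.2 := by
  rintro ⟨⟨A, hA⟩, τ, ρ⟩ ⟨⟨B, hB⟩, τ', ρ'⟩ heq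
  have hAB : A ⊆ B := fun x hx => by
    obtain ⟨j, hj⟩ := (A.orderIsoOfFin hA).surjective ⟨x, hx⟩
    have := congrArg (· (finSumFinSubEquiv h (.inl (τ.symm j)))) heq
    simp only [Perm.mul_apply, blockPerm_apply_inl, splitPerm_apply_inl,
      Equiv.apply_symm_apply, hj] at this
    exact this ▸ Finset.coe_mem _
  obtain rfl : A = B := Finset.eq_of_subset_of_card_le hAB (hA.trans hB.symm).ge
  have := blockPerm_injective h (mul_left_cancel heq)
  simp_all

lemma splitPerm_mul_blockPerm_pi_bijective (m : ℕ) :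
    Function.Bijective fun x : (Fin m → {A : Finset (Fin n) // A.card = r}) ×
        (Fin m → Perm (Fin r)) × (Fin m → Perm (Fin (n - r))) =>
      fun s => splitPerm (x.1 s).1 (x.1 s).2 * blockPerm h (x.2.1 s) (x.2.2 s) := by
  have hcard : Fintype.card ((Fin m → {A : Finset (Fin n) // A.card = r}) ×
      (Fin m → Perm (Fin r)) × (Fin m → Perm (Fin (n - r)))) =
        Fintype.card (Fin m → Perm (Fin n)) := by
    simp only [Fintype.card_prod, Fintype.card_fun, Fintype.card_perm, Fintype.card_finset_len,
      Fintype.card_fin, ← mul_pow, ← mul_assoc, Nat.choose_mul_factorial_mul_factorial h]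
  refine (Fintype.bijective_iff_injective_and_card _).mpr ⟨fun x y hxy => ?_, hcard⟩
  have hs s := splitPerm_mul_blockPerm_injective h (a₁ := (x.1 s, x.2.1 s, x.2.2 s))
    (a₂ := (y.1 s, y.2.1 s, y.2.2 s)) (congrFun hxy s)
  simp only [Prod.mk.injEq] at hs
  ext1
  · exact funext fun s => (hs s).1
  ext1
  · exact funext fun s => (hs s).2.1
  · exact funext fun s => (hs s).2.2

end CosetDecomposition

section Expansion

variable {m n r : ℕ} (h : r ≤ n) (M N : (Fin m → Fin n) → ℝ)

/-- The term of `∏ i, (M + N)(σ · i)` taking the first `r` factors from `M`, the rest from `N`.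
-/
def blockProd (σ : Fin m → Perm (Fin n)) : ℝ :=
  (∏ j : Fin r, M fun s => σ s (finSumFinSubEquiv h (.inl j))) *
    ∏ j : Fin (n - r), N fun s => σ s (finSumFinSubEquiv h (.inr j))

lemma signedPermSum_prod_mul_prod_sdiff (hm : Even m) {S : Finset (Fin n)} (hS : S.card = r) :
    signedPermSum (fun σ =>
        (∏ i ∈ S, M fun s => σ s i) * ∏ i ∈ univ \ S, N fun s => σ s i) =
      signedPermSum (blockProd h M N) := by
  have hSc : Sᶜ.card = n - r := by simp [Finset.card_compl, hS]
  rw [← signedPermSum_comp_mul_right hm (splitPerm S hS) (blockProd h M N)]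
  congr 1
  funext σ
  rw [← Finset.compl_eq_univ_sdiff, ← Finset.prod_coe_sort S, ← Finset.prod_coe_sort Sᶜ,
    ← (S.orderIsoOfFin hS).toEquiv.prod_comp, ← (Sᶜ.orderIsoOfFin hSc).toEquiv.prod_comp]
  simp [blockProd]

lemma signedPermSum_blockProd :
    signedPermSum (blockProd h M N) =
      ∑ I : Fin m → {A : Finset (Fin n) // A.card = r},
        (∏ s, ((Perm.sign (splitPerm (I s).1 (I s).2) : ℤ) : ℝ)) *
          (signedPermSum (fun τ => ∏ j, hypMinor M (fun s => (I s).1) (fun s => (I s).2)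
              fun s => τ s j) *
            signedPermSum (fun ρ => ∏ j, hypMinor (r := n - r) N (fun s => (I s).1ᶜ)
              (fun s => by simp [Finset.card_compl, (I s).2]) fun s => ρ s j)) := by
  unfold signedPermSum
  rw [← Fintype.sum_bijective _ (splitPerm_mul_blockPerm_pi_bijective h m) _ _ fun _ => rfl,
    Fintype.sum_prod_type]
  refine Fintype.sum_congr _ _ fun I => ?_
  rw [Fintype.sum_prod_type, Finset.sum_mul_sum, Finset.mul_sum]
  refine Fintype.sum_congr _ _ fun τ => ?_
  rw [Finset.mul_sum]
  refine Fintype.sum_congr _ _ fun ρ => ?_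
  simp only [blockProd, hypMinor, map_mul, sign_blockPerm, Units.val_mul, Int.cast_mul,
    Finset.prod_mul_distrib, Perm.mul_apply, blockPerm_apply_inl, blockPerm_apply_inr,
    splitPerm_apply_inl, splitPerm_apply_inr]
  ring

end Expansion

lemma Finset.sum_attach_filter_forall {ι α R : Type*} [Fintype ι] [DecidableEq ι] [Fintype α]
    [AddCommMonoid R] (p : α → Prop) [DecidablePred p]
    [DecidablePred fun I : ι → α => ∀ s, p (I s)]
    (f : {I // I ∈ univ.filter fun I : ι → α => ∀ s, p (I s)} → R) :
    ∑ I ∈ (univ.filter fun I : ι → α => ∀ s, p (I s)).attach, f I =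
      ∑ I : ι → {a // p a},
        f ⟨fun s => I s, Finset.mem_filter.mpr ⟨mem_univ _, fun s => (I s).2⟩⟩ := by
  rw [← Finset.univ_eq_attach]
  exact Fintype.sum_equiv ((Equiv.subtypeEquivRight fun _ => by simp).trans
    (Equiv.subtypePiEquivPi (p := fun _ => p))) _ _ fun _ => rfl

/-- Minor summation formula for hyperdeterminants:
`Det(M+N) = ∑_r ∑_{(I,J)} ε(I,J) Det(M[I]) Det(N[J])`, the inner sum being over
`2k`-tuples `I` of `r`-element subsets, with `J` the complementary tuple. -/
theorem hypDet_minor_summation (n k : ℕ)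
    (M N : (Fin (2 * k) → Fin n) → ℝ) :
    hypDet (fun t => M t + N t) =
      ∑ r ∈ Finset.range (n + 1),
        ∑ I ∈ (Finset.univ.filter
            (fun I : Fin (2 * k) → Finset (Fin n) => ∀ s, (I s).card = r)).attach,
          (∏ s, ((Equiv.Perm.sign
              (splitPerm (I.1 s) ((Finset.mem_filter.mp I.2).2 s)) : ℤ) : ℝ)) *
            hypDet (hypMinor M I.1 (Finset.mem_filter.mp I.2).2) *
            hypDet (hypMinor (r := n - r) N (fun s => (I.1 s)ᶜ)
              (fun s => by
                simp [Finset.card_compl, (Finset.mem_filter.mp I.2).2 s])) := by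
  have hm : Even (2 * k) := even_two_mul k
  rw [hypDet_eq_signedPermSum]
  simp_rw [Finset.prod_add]
  rw [signedPermSum_sum, Finset.sum_powerset, Finset.card_fin, Finset.mul_sum]
  refine Finset.sum_congr rfl fun r hr => ?_
  have h : r ≤ n := Nat.lt_succ_iff.mp (Finset.mem_range.mp hr)
  rw [Finset.sum_congr rfl fun S hS => signedPermSum_prod_mul_prod_sdiff h M N hm
      (Finset.mem_powersetCard_univ.mp hS), Finset.sum_const, Finset.card_powersetCard,
    Finset.card_fin, signedPermSum_blockProd,
    Finset.sum_attach_filter_forall fun A : Finset (Fin n) => A.card = r,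
    Finset.smul_sum, Finset.mul_sum]
  refine Fintype.sum_congr _ _ fun I => ?_
  have hfact : (n.choose r : ℝ) * r ! * (n - r)! = n ! := by
    exact_mod_cast Nat.choose_mul_factorial_mul_factorial h
  have hchoose : (n.choose r : ℝ) ≠ 0 := by exact_mod_cast (Nat.choose_pos h).ne'
  rw [hypDet_eq_signedPermSum, hypDet_eq_signedPermSum, nsmul_eq_mul, ← hfact]
  field_simp
end

section
/- Support of the expansion of a Hankel hyperdeterminant: Let n ≥ 1 and k ≥ 1 be integers. Consider the hyperdeterminant H = Det(M) of the Hankel hypermatrix M of order 2k and dimension n with entries M(i₁,…,i_{2k}) = X_{i₁+⋯+i_{2k}}, viewed as a polynomial in the commuting variables X₀, X₁, …, X_{2k(n−1)} with rational coefficients. Then every monomial X_{λ₁}X_{λ₂}⋯X_{λ_n} occurring in H with nonzero coefficient, written with λ₁ ≤ λ₂ ≤ ⋯ ≤ λ_n, satisfies λ₁+⋯+λ_n = k·n·(n−1) and k(i−1) ≤ λ_i ≤ k(n+i−2) for each i ∈ {1,…,n}. -/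
open Nat

/-- The hyperdeterminant of a hypermatrix of order `m` and dimension `n` with
entries in the polynomial ring `ℚ[X₀,…,X_{N-1}]` (where division by `n!`
is meaningful). -/
noncomputable def hypDetP {m n N : ℕ} (M : (Fin m → Fin n) → MvPolynomial (Fin N) ℚ) :
    MvPolynomial (Fin N) ℚ :=
  ((n ! : ℚ)⁻¹) • ∑ σ : Fin m → Equiv.Perm (Fin n),
    (∏ s, ((Equiv.Perm.sign (σ s) : ℤ) : ℚ)) • ∏ i, M fun s => σ s i

/-- The Hankel hypermatrix of order `2k` and dimension `n` with entries
`X_{i₁+⋯+i₂ₖ}` in `ℚ[X₀,…,X_{2k(n-1)}]`. -/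
noncomputable def hankelX (n k : ℕ) :
    (Fin (2 * k) → Fin n) → MvPolynomial (Fin (2 * k * (n - 1) + 1)) ℚ :=
  fun t => MvPolynomial.X ⟨∑ s, (t s : ℕ), by
    have h : ∀ s : Fin (2 * k), (t s : ℕ) ≤ n - 1 :=
      fun s => Nat.le_pred_of_lt (t s).isLt
    calc ∑ s, (t s : ℕ) ≤ ∑ _s : Fin (2 * k), (n - 1) :=
          Finset.sum_le_sum fun s _ => h s
      _ = 2 * k * (n - 1) := by simp [Finset.sum_const, mul_comm]
      _ < 2 * k * (n - 1) + 1 := Nat.lt_succ_self _⟩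

/-!
Expanding the hyperdeterminant, every monomial is `∏ᵢ X_{bᵢ}` where `bᵢ = ∑ₛ σₛ(i)` are the
column sums of a tuple of `2k` permutations of `{0,…,n-1}`. Each row contributes exactly
`0 + 1 + ⋯ + (n-1)` to the total, and at least `0 + 1 + ⋯ + (r-1)` to the sum over any `r`
columns. Applied to the `i + 1` smallest and to the `i` smallest entries of the sorted
tuple `λ`, this gives `(i+1) λᵢ ≥ k (i+1) i` and
`(n-i) λᵢ ≤ k (n(n-1) - i(i-1)) = k (n-i)(n+i-1)`.
-/

open Finset

lemma Finset.sum_range_card_le_sum_of_injOn {ι : Type*} {s : Finset ι} {f : ι → ℕ}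
    (hf : Set.InjOn f s) : ∑ j ∈ range #s, j ≤ ∑ x ∈ s, f x := by
  have h := sum_range_le_sum (s := s.image fun x => (f x : ℤ)) (c := 0) (by simp)
  rw [card_image_of_injOn (fun a ha b hb hab => hf ha hb (by exact_mod_cast hab)),
    sum_image (fun a ha b hb hab => hf ha hb (by exact_mod_cast hab))] at h
  simp only [zero_add] at h
  rw [← Nat.cast_sum, ← Nat.cast_sum] at h
  exact Int.ofNat_le.mp h

lemma Nat.mul_sub_one_eq_add {a b : ℕ} (h : a ≤ b) :
    b * (b - 1) = a * (a - 1) + (b - a) * (b + a - 1) := by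
  obtain ⟨t, rfl⟩ := Nat.exists_eq_add_of_le h
  rcases a with _ | a
  · simp
  · simp only [Nat.add_sub_cancel_left, Nat.add_sub_cancel]
    rw [show a + 1 + t + (a + 1) - 1 = 2 * a + t + 1 by omega,
      show a + 1 + t - 1 = a + t by omega]
    ring

section SortedBounds

variable {n m : ℕ} {f : Fin n → ℕ}

theorem Monotone.mul_le_two_mul_of_sum_ge (hf : Monotone f)
    (hsum : ∀ T : Finset (Fin n), m * ∑ j ∈ range #T, j ≤ ∑ i ∈ T, f i) (i : Fin n) :
    m * i ≤ 2 * f i := by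
  have hIic : ∑ j ∈ Iic i, f j ≤ (i + 1) * f i := by
    simpa [Fin.card_Iic] using sum_le_card_nsmul (Iic i) f (f i) fun j hj => hf (mem_Iic.mp hj)
  have h := (hsum (Iic i)).trans hIic
  rw [Fin.card_Iic] at h
  have hgauss := sum_range_id_mul_two (i + 1)
  simp only [Nat.add_sub_cancel] at hgauss
  refine Nat.le_of_mul_le_mul_left (c := i + 1) ?_ (Nat.succ_pos _)
  nlinarith

theorem Monotone.two_mul_le_mul_of_sum_ge (hf : Monotone f)
    (hsum : ∀ T : Finset (Fin n), m * ∑ j ∈ range #T, j ≤ ∑ i ∈ T, f i)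
    (htotal : ∑ i, f i = m * ∑ j ∈ range n, j) (i : Fin n) :
    2 * f i ≤ m * (n + i - 1) := by
  have hIci : (n - i) * f i ≤ ∑ j ∈ Ici i, f j := by
    simpa [Fin.card_Ici] using card_nsmul_le_sum (Ici i) f (f i) fun j hj => hf (mem_Ici.mp hj)
  have hcompl := hsum (Ici i)ᶜ
  rw [card_compl, Fintype.card_fin, Fin.card_Ici, Nat.sub_sub_self i.is_le'] at hcompl
  have hsplit := sum_add_sum_compl (Ici i) f
  have hn := sum_range_id_mul_two n
  have hi := sum_range_id_mul_two i
  have hid := Nat.mul_sub_one_eq_add i.is_le'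
  refine Nat.le_of_mul_le_mul_left (c := n - i) ?_ (Nat.sub_pos_of_lt i.is_lt)
  nlinarith

end SortedBounds

lemma sum_val_le_mul {m n : ℕ} (t : Fin m → Fin n) : ∑ s, (t s : ℕ) ≤ m * (n - 1) := by
  simpa using sum_le_card_nsmul univ (fun s => (t s : ℕ)) (n - 1) fun s _ =>
    Nat.le_sub_one_of_lt (t s).is_lt

section ColumnSum

variable {m n : ℕ} (σ : Fin m → Equiv.Perm (Fin n))

def columnSum (i : Fin n) : ℕ := ∑ s, (σ s i : ℕ)

lemma sum_columnSum : ∑ i, columnSum σ i = m * ∑ j ∈ range n, j := by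
  simp only [columnSum]
  rw [sum_comm]
  simp [Equiv.sum_comp (σ _) (fun j : Fin n => (j : ℕ)), Fin.sum_univ_eq_sum_range (fun j => j) n]

lemma mul_sum_range_card_le_sum_columnSum (T : Finset (Fin n)) :
    m * ∑ j ∈ range #T, j ≤ ∑ i ∈ T, columnSum σ i := by
  simp only [columnSum]
  rw [sum_comm]
  simpa using card_nsmul_le_sum univ (fun s => ∑ i ∈ T, (σ s i : ℕ)) _ fun s _ =>
    sum_range_card_le_sum_of_injOn fun a _ b _ hab => (σ s).injective (Fin.val_injective hab)

end ColumnSum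

lemma exists_coeff_prod_ne_zero_of_coeff_hypDetP_ne_zero {m n N : ℕ}
    {M : (Fin m → Fin n) → MvPolynomial (Fin N) ℚ} {d : Fin N →₀ ℕ}
    (hd : MvPolynomial.coeff d (hypDetP M) ≠ 0) :
    ∃ σ : Fin m → Equiv.Perm (Fin n), MvPolynomial.coeff d (∏ i, M fun s => σ s i) ≠ 0 := by
  by_contra! h
  simp [hypDetP, MvPolynomial.coeff_sum, h] at hd

theorem hankel_hypDet_support_general (n k : ℕ)
    (d : Fin (2 * k * (n - 1) + 1) →₀ ℕ)
    (hd : MvPolynomial.coeff d (hypDetP (hankelX n k)) ≠ 0) :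
    ∃ lam : Fin n → Fin (2 * k * (n - 1) + 1),
      Monotone lam ∧
      d = ∑ i : Fin n, Finsupp.single (lam i) 1 ∧
      (∑ i : Fin n, (lam i : ℕ)) = k * n * (n - 1) ∧
      (∀ i : Fin n, k * (i : ℕ) ≤ (lam i : ℕ) ∧ (lam i : ℕ) ≤ k * (n + (i : ℕ) - 1)) := by
  obtain ⟨σ, hσ⟩ := exists_coeff_prod_ne_zero_of_coeff_hypDetP_ne_zero hd
  let b : Fin n → Fin (2 * k * (n - 1) + 1) := fun i =>
    ⟨columnSum σ i, Nat.lt_succ_of_le (sum_val_le_mul fun s => σ s i)⟩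
  have hprod : ∏ i, hankelX n k (fun s => σ s i) =
      MvPolynomial.monomial (∑ i, Finsupp.single (b i) 1) 1 := by
    rw [MvPolynomial.monomial_sum_one]
    rfl
  rw [hprod, MvPolynomial.coeff_monomial] at hσ
  let π := Tuple.sort b
  -- The sorted tuple `b ∘ π` is itself a column sum, of the permutations `σ s ∘ π`.
  let τ : Fin (2 * k) → Equiv.Perm (Fin n) := fun s => π.trans (σ s)
  have hmono : Monotone (columnSum τ) := fun _ _ h => Tuple.monotone_sort b h
  refine ⟨b ∘ π, Tuple.monotone_sort b, ?_, ?_, fun i => ⟨?_, ?_⟩⟩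
  · rw [← (ite_ne_right_iff.mp hσ).1]
    exact (Equiv.sum_comp π _).symm
  · change ∑ i, columnSum τ i = _
    rw [sum_columnSum, mul_comm 2 k, mul_assoc, mul_comm 2, sum_range_id_mul_two, mul_assoc]
  · have := hmono.mul_le_two_mul_of_sum_ge (mul_sum_range_card_le_sum_columnSum τ) i
    rw [mul_assoc] at this
    exact Nat.le_of_mul_le_mul_left this two_pos
  · have := hmono.two_mul_le_mul_of_sum_ge (mul_sum_range_card_le_sum_columnSum τ)
      (sum_columnSum τ) i
    rw [mul_assoc] at this
    exact Nat.le_of_mul_le_mul_left this two_pos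

/-- Support of the expansion of a Hankel hyperdeterminant: every monomial
`X_{λ₁}⋯X_{λₙ}` (with `λ₁ ≤ ⋯ ≤ λₙ`) occurring with nonzero coefficient
satisfies `λ₁+⋯+λₙ = k n (n-1)` and `k(i-1) ≤ λᵢ ≤ k(n+i-2)` (here the sorted
tuple `λ` is indexed by `Fin n`, so `λᵢ` for `i ∈ {0,…,n-1}` must satisfy
`k·i ≤ λᵢ ≤ k(n+i-1)`). -/
theorem hankel_hypDet_support (n k : ℕ) (hn : 1 ≤ n) (hk : 1 ≤ k)
    (d : Fin (2 * k * (n - 1) + 1) →₀ ℕ)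
    (hd : MvPolynomial.coeff d (hypDetP (hankelX n k)) ≠ 0) :
    ∃ lam : Fin n → Fin (2 * k * (n - 1) + 1),
      Monotone lam ∧
      d = ∑ i : Fin n, Finsupp.single (lam i) 1 ∧
      (∑ i : Fin n, (lam i : ℕ)) = k * n * (n - 1) ∧
      (∀ i : Fin n, k * (i : ℕ) ≤ (lam i : ℕ) ∧ (lam i : ℕ) ≤ k * (n + (i : ℕ) - 1)) :=
  hankel_hypDet_support_general n k d hd
end

section
/- Dyson's constant term identity: Let n ≥ 1 and let a₁,…,a_n be nonnegative integers. The constant term (the coefficient of x₁⁰⋯x_n⁰) of the Laurent polynomial ∏_{1 ≤ i ≠ j ≤ n} (1 − x_i/x_j)^{a_i} in the variables x₁,…,x_n equals the multinomial coefficient (a₁+⋯+a_n)! / (a₁!⋯a_n!). -/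
/-- The Laurent monomial `x_i^e`, as an element of the group algebra
`ℤ[x₁^{±1},…,x_n^{±1}] = AddMonoidAlgebra ℤ (Fin n →₀ ℤ)`. -/
noncomputable def laurentX {n : ℕ} (i : Fin n) (e : ℤ) :
    AddMonoidAlgebra ℤ (Fin n →₀ ℤ) :=
  AddMonoidAlgebra.single (Finsupp.single i e) 1

namespace Dyson
variable {n : ℕ}

local notation "Rn" => AddMonoidAlgebra ℤ (Fin n →₀ ℤ)

instance : IsDomain (AddMonoidAlgebra ℤ (Fin n →₀ ℤ)) := NoZeroDivisors.to_isDomain _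

lemma X_mul_X (i : Fin n) (e f : ℤ) : laurentX i e * laurentX i f = laurentX i (e + f) := by
  unfold laurentX
  rw [AddMonoidAlgebra.single_mul_single, one_mul, ← Finsupp.single_add]

lemma X_mul_X_inv (i : Fin n) : laurentX i 1 * laurentX i (-1) = 1 := by
  rw [X_mul_X]; norm_num [laurentX]; rfl

lemma X_ne_zero (i : Fin n) (e : ℤ) : laurentX i e ≠ 0 := by
  unfold laurentX
  simp [Finsupp.single_eq_zero]

lemma X_inj {i j : Fin n} (h : laurentX i 1 = laurentX j 1) : i = j := by
  unfold laurentX at h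
  have h2 := (AddMonoidAlgebra.single_left_inj (one_ne_zero (α := ℤ))).mp h
  exact (Finsupp.single_left_inj (one_ne_zero (α := ℤ))).mp h2

lemma one_sub_ne_zero {i j : Fin n} (hij : i ≠ j) :
    (1 : Rn) - laurentX i 1 * laurentX j (-1) ≠ 0 := by
  intro h
  have h1 : (1 : Rn) = laurentX i 1 * laurentX j (-1) := by linear_combination h
  unfold laurentX at h1
  rw [AddMonoidAlgebra.single_mul_single, one_mul] at h1
  have hone : (1 : Rn) = AddMonoidAlgebra.single 0 1 := rfl
  rw [hone] at h1
  have h2 := (AddMonoidAlgebra.single_left_inj (one_ne_zero (α := ℤ))).mp h1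
  have := DFunLike.congr_fun h2 i
  simp [Finsupp.single_apply, (Ne.symm hij : j ≠ i)] at this

open Pointwise in
lemma support_mul_subset {A : Set (Fin n →₀ ℤ)} (hadd : ∀ a ∈ A, ∀ b ∈ A, a + b ∈ A)
    {f g : Rn} (hf : ↑f.coeff.support ⊆ A) (hg : ↑g.coeff.support ⊆ A) : ↑(f * g).coeff.support ⊆ A := by
  classical
  intro m hm
  have h := AddMonoidAlgebra.support_coeff_mul_subset f g hm
  rw [Finset.mem_add] at h
  obtain ⟨b, hb, c, hc, h⟩ := h
  rw [← h]
  exact hadd b (hf hb) c (hg hc)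

lemma support_one_subset' {A : Set (Fin n →₀ ℤ)} (h0 : (0 : Fin n →₀ ℤ) ∈ A) :
    ↑(1 : Rn).coeff.support ⊆ A := by
  intro m hm
  have := AddMonoidAlgebra.support_coeff_one_subset (k := ℤ) (G := Fin n →₀ ℤ) hm
  simp only [Finset.mem_zero] at this
  rwa [this]

lemma support_pow_subset {A : Set (Fin n →₀ ℤ)} (h0 : (0 : Fin n →₀ ℤ) ∈ A)
    (hadd : ∀ a ∈ A, ∀ b ∈ A, a + b ∈ A) {f : Rn} (hf : ↑f.coeff.support ⊆ A) (m : ℕ) :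
    ↑(f ^ m).coeff.support ⊆ A := by
  induction m with
  | zero => simpa using support_one_subset' h0
  | succ m ih => rw [pow_succ]; exact support_mul_subset hadd ih hf

lemma support_prod_subset {A : Set (Fin n →₀ ℤ)} (h0 : (0 : Fin n →₀ ℤ) ∈ A)
    (hadd : ∀ a ∈ A, ∀ b ∈ A, a + b ∈ A) {ι : Type*} (t : Finset ι) (f : ι → Rn)
    (hf : ∀ i ∈ t, ↑(f i).coeff.support ⊆ A) : ↑(∏ i ∈ t, f i).coeff.support ⊆ A := by
  classical
  refine Finset.prod_induction f (fun x => ↑x.coeff.support ⊆ A) (fun x y hx hy => ?_) ?_ hf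
  · exact support_mul_subset hadd hx hy
  · exact support_one_subset' h0

lemma coeff_zero_one : (1 : Rn).coeff 0 = 1 := by
  have : (1 : Rn) = AddMonoidAlgebra.single 0 1 := rfl
  rw [this]; simp

lemma mul_apply_zero {A B : Set (Fin n →₀ ℤ)}
    (hAB : ∀ a ∈ A, ∀ b ∈ B, a + b = 0 → a = 0 ∧ b = 0)
    {f g : Rn} (hf : ↑f.coeff.support ⊆ A) (hg : ↑g.coeff.support ⊆ B) :
    (f * g).coeff 0 = f.coeff 0 * g.coeff 0 := by
  classical
  rw [AddMonoidAlgebra.coeff_mul, Finsupp.sum]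
  have step1 : ∀ a₁ ∈ f.coeff.support,
      (Finsupp.sum g.coeff fun a₂ b₂ => if a₁ + a₂ = 0 then f.coeff a₁ * b₂ else 0) =
      ∑ a₂ ∈ g.coeff.support, (if a₁ = 0 then f.coeff a₁ else 0) * (if a₂ = 0 then g.coeff a₂ else 0) := by
    intro a₁ h₁
    rw [Finsupp.sum]
    refine Finset.sum_congr rfl fun a₂ h₂ => ?_
    by_cases h : a₁ + a₂ = 0
    · obtain ⟨ha, hb⟩ := hAB _ (hf h₁) _ (hg h₂) h
      simp [h, ha, hb]
    · rw [if_neg h]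
      by_cases h1 : a₁ = 0 <;> by_cases h2 : a₂ = 0 <;> simp_all
  rw [Finset.sum_congr rfl step1, ← Finset.sum_mul_sum]
  have e1 : (∑ a₁ ∈ f.coeff.support, if a₁ = 0 then f.coeff a₁ else 0) = f.coeff 0 := by
    rw [Finset.sum_ite_eq' f.coeff.support (0 : Fin n →₀ ℤ) f.coeff]
    split_ifs with h
    · rfl
    · exact (Finsupp.notMem_support_iff.mp h).symm
  have e2 : (∑ a₂ ∈ g.coeff.support, if a₂ = 0 then g.coeff a₂ else 0) = g.coeff 0 := by
    rw [Finset.sum_ite_eq' g.coeff.support (0 : Fin n →₀ ℤ) g.coeff]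
    split_ifs with h
    · rfl
    · exact (Finsupp.notMem_support_iff.mp h).symm
  rw [e1, e2]

lemma supp_factor (i j : Fin n) :
    ↑((1 : Rn) - laurentX i 1 * laurentX j (-1)).coeff.support ⊆
      ({0, Finsupp.single i 1 + Finsupp.single j (-1)} : Set (Fin n →₀ ℤ)) := by
  classical
  have h : (1 : Rn) - laurentX i 1 * laurentX j (-1) =
      AddMonoidAlgebra.single 0 1 -
        AddMonoidAlgebra.single (Finsupp.single i 1 + Finsupp.single j (-1)) 1 := by
    unfold laurentX
    rw [AddMonoidAlgebra.single_mul_single, one_mul]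
    rfl
  rw [h]
  intro m hm
  rw [AddMonoidAlgebra.coeff_sub, AddMonoidAlgebra.coeff_single, AddMonoidAlgebra.coeff_single] at hm
  have h2 := Finsupp.support_sub (ι := Fin n →₀ ℤ) hm
  rw [Finset.mem_union] at h2
  rcases h2 with h2 | h2 <;> have := Finsupp.support_single_subset h2 <;>
    simp only [Finset.mem_singleton] at this <;> simp [this]

lemma coeff_zero_factor (i j : Fin n) (hij : i ≠ j) :
    ((1 : Rn) - laurentX i 1 * laurentX j (-1)).coeff 0 = 1 := by
  classical
  have h : (1 : Rn) - laurentX i 1 * laurentX j (-1) =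
      AddMonoidAlgebra.single 0 1 -
        AddMonoidAlgebra.single (Finsupp.single i 1 + Finsupp.single j (-1)) 1 := by
    unfold laurentX
    rw [AddMonoidAlgebra.single_mul_single, one_mul]
    rfl
  have hne : Finsupp.single i 1 + Finsupp.single j (-1 : ℤ) ≠ 0 := by
    intro hc
    have := DFunLike.congr_fun hc i
    simp [Finsupp.single_apply, (Ne.symm hij : j ≠ i)] at this
  rw [h, AddMonoidAlgebra.coeff_sub, AddMonoidAlgebra.coeff_single, AddMonoidAlgebra.coeff_single,
    Finsupp.sub_apply, Finsupp.single_eq_of_ne' hne, Finsupp.single_eq_same]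
  ring

noncomputable def G (s : Finset (Fin n)) (i : Fin n) : Rn :=
  ∏ j ∈ s.erase i, (1 - laurentX i 1 * laurentX j (-1))

lemma G_ne_zero (s : Finset (Fin n)) (i : Fin n) : G s i ≠ 0 :=
  Finset.prod_ne_zero_iff.mpr fun j hj =>
    one_sub_ne_zero (Ne.symm (Finset.mem_erase.mp hj).1)

lemma prod_offdiag (s : Finset (Fin n)) (a : Fin n → ℕ) :
    ∏ p ∈ (s ×ˢ s).filter (fun p => p.1 ≠ p.2),
        (1 - laurentX p.1 1 * laurentX p.2 (-1)) ^ a p.1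
      = ∏ i ∈ s, (G s i) ^ a i := by
  classical
  rw [Finset.prod_filter, Finset.prod_product]
  refine Finset.prod_congr rfl fun i _ => ?_
  rw [G, ← Finset.prod_pow, ← Finset.filter_ne', Finset.prod_filter]
  exact Finset.prod_congr rfl fun j _ => if_congr ne_comm rfl rfl

lemma prod_G_split (s : Finset (Fin n)) (a : Fin n → ℕ) {k : Fin n} (hk : k ∈ s)
    (hak : 1 ≤ a k) :
    ∏ i ∈ s, G s i ^ a i =
      (∏ i ∈ s, G s i ^ (Function.update a k (a k - 1)) i) * G s k := by
  classical
  rw [← Finset.prod_erase_mul s _ hk, ← Finset.prod_erase_mul s _ hk]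
  have h : ∀ i ∈ s.erase k,
      G s i ^ (Function.update a k (a k - 1)) i = G s i ^ a i := fun i hi => by
    rw [Function.update_of_ne (Finset.mem_erase.mp hi).1]
  rw [Finset.prod_congr rfl h, mul_assoc]
  congr 1
  rw [Function.update_self, ← pow_succ]
  congr 1
  omega

lemma good (s : Finset (Fin n)) (hs : s.Nonempty) :
    ∑ k ∈ s, ∏ l ∈ s.erase k, G s l = ∏ l ∈ s, G s l := by
  classical
  let K := FractionRing (AddMonoidAlgebra ℤ (Fin n →₀ ℤ))
  let φ : Rn →+* K := algebraMap _ _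
  have hφ : Function.Injective φ := IsFractionRing.injective _ _
  apply hφ
  let v : Fin n → K := fun i => φ (laurentX i 1)
  have hvne : ∀ i, v i ≠ 0 := fun i h =>
    X_ne_zero i 1 (hφ (by rw [map_zero]; exact h))
  have hvinj : Set.InjOn v ↑s := fun i _ j _ h => X_inj (hφ h)
  have hsub : ∀ {l j : Fin n}, l ∈ s → j ∈ s → j ≠ l → v j - v l ≠ 0 := by
    intro l j hl hj hne
    exact sub_ne_zero.mpr fun h => hne (hvinj hj hl h)
  have hG : ∀ l, φ (G s l) = ∏ j ∈ s.erase l, (1 - v l * (v j)⁻¹) := by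
    intro l
    rw [G, map_prod]
    refine Finset.prod_congr rfl fun j hj => ?_
    rw [map_sub, map_one, map_mul]
    congr 1
    congr 1
    have h1 : v j * φ (laurentX j (-1)) = 1 := by
      show φ (laurentX j 1) * φ (laurentX j (-1)) = 1
      rw [← map_mul, X_mul_X_inv, map_one]
    exact inv_eq_of_mul_eq_one_right h1 |>.symm
  have hfacne : ∀ {l j : Fin n}, l ∈ s → j ∈ s → j ≠ l → (1 - v l * (v j)⁻¹) ≠ 0 := by
    intro l j hl hj hne
    have he : (1 - v l * (v j)⁻¹) = (v j - v l) * (v j)⁻¹ := by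
      rw [sub_mul, mul_inv_cancel₀ (hvne j)]
    rw [he]
    exact mul_ne_zero (hsub hl hj hne) (inv_ne_zero (hvne j))
  have hGne : ∀ l ∈ s, φ (G s l) ≠ 0 := by
    intro l hl
    rw [hG]
    exact Finset.prod_ne_zero_iff.mpr fun j hj =>
      hfacne hl (Finset.mem_erase.mp hj).2 (Finset.mem_erase.mp hj).1
  have hGinv : ∀ l ∈ s, (φ (G s l))⁻¹ = Polynomial.eval 0 (Lagrange.basis s v l) := by
    intro l hl
    rw [hG, Lagrange.basis, Polynomial.eval_prod, ← Finset.prod_inv_distrib]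
    refine Finset.prod_congr rfl fun j hj => ?_
    obtain ⟨hjl, hjs⟩ := Finset.mem_erase.mp hj
    refine inv_eq_of_mul_eq_one_right ?_
    rw [Lagrange.basisDivisor]
    simp only [Polynomial.eval_mul, Polynomial.eval_C, Polynomial.eval_sub,
      Polynomial.eval_X]
    have h1 : v j ≠ 0 := hvne j
    have h2 : v l - v j ≠ 0 := sub_ne_zero.mpr fun h => hjl (hvinj hl hjs h).symm
    have e : 1 - v l * (v j)⁻¹ = (v j - v l) * (v j)⁻¹ := by
      rw [sub_mul, mul_inv_cancel₀ h1]
    rw [e]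
    calc _ = ((v l - v j) * (v l - v j)⁻¹) * (v j * (v j)⁻¹) := by ring
      _ = 1 := by rw [mul_inv_cancel₀ h2, mul_inv_cancel₀ h1, one_mul]
  calc φ (∑ k ∈ s, ∏ l ∈ s.erase k, G s l)
      = ∑ k ∈ s, ∏ l ∈ s.erase k, φ (G s l) := by
        rw [map_sum]
        exact Finset.sum_congr rfl fun k _ => map_prod φ _ _
    _ = ∑ k ∈ s, (∏ l ∈ s, φ (G s l)) * (φ (G s k))⁻¹ := by
        refine Finset.sum_congr rfl fun k hk => ?_
        rw [eq_mul_inv_iff_mul_eq₀ (hGne k hk), Finset.prod_erase_mul _ _ hk]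
    _ = (∏ l ∈ s, φ (G s l)) * ∑ k ∈ s, Polynomial.eval 0 (Lagrange.basis s v k) := by
        rw [← Finset.mul_sum]
        congr 1
        exact Finset.sum_congr rfl hGinv
    _ = ∏ l ∈ s, φ (G s l) := by
        rw [← Polynomial.eval_finset_sum, Lagrange.sum_basis hvinj hs,
          Polynomial.eval_one, mul_one]
    _ = φ (∏ l ∈ s, G s l) := (map_prod φ _ _).symm

lemma recursion (s : Finset (Fin n)) (hs : s.Nonempty) (a : Fin n → ℕ)
    (ha : ∀ k ∈ s, 1 ≤ a k) :
    ∏ i ∈ s, G s i ^ a i =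
      ∑ k ∈ s, ∏ i ∈ s, G s i ^ (Function.update a k (a k - 1)) i := by
  classical
  have hP : (∏ l ∈ s, G s l) ≠ 0 := Finset.prod_ne_zero_iff.mpr fun l _ => G_ne_zero s l
  apply mul_right_cancel₀ hP
  rw [Finset.sum_mul]
  have h : ∀ k ∈ s, (∏ i ∈ s, G s i ^ (Function.update a k (a k - 1)) i) * ∏ l ∈ s, G s l
      = (∏ i ∈ s, G s i ^ a i) * ∏ l ∈ s.erase k, G s l := by
    intro k hk
    have e : (∏ l ∈ s, G s l) = (∏ l ∈ s.erase k, G s l) * G s k :=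
      (Finset.prod_erase_mul s _ hk).symm
    rw [prod_G_split s a hk (ha k hk), e]
    ring
  rw [Finset.sum_congr rfl h, ← Finset.mul_sum, good s hs]

lemma prod_G_erase (s : Finset (Fin n)) (a : Fin n → ℕ) {k : Fin n} (hk : k ∈ s)
    (hak : a k = 0) :
    ∏ i ∈ s, G s i ^ a i =
      (∏ i ∈ s.erase k, G (s.erase k) i ^ a i) *
        ∏ i ∈ s.erase k, (1 - laurentX i 1 * laurentX k (-1)) ^ a i := by
  classical
  rw [← Finset.prod_erase_mul s _ hk, hak, pow_zero, mul_one, ← Finset.prod_mul_distrib]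
  refine Finset.prod_congr rfl fun i hi => ?_
  rw [← mul_pow]
  congr 1
  have hik : i ≠ k := (Finset.mem_erase.mp hi).1
  have hk' : k ∈ s.erase i := Finset.mem_erase.mpr ⟨Ne.symm hik, hk⟩
  rw [G, G, ← Finset.mul_prod_erase _ _ hk', mul_comm]
  congr 1
  rw [Finset.erase_right_comm]

lemma ct_removal (s : Finset (Fin n)) (a : Fin n → ℕ) {k : Fin n} (hk : k ∈ s)
    (hak : a k = 0) :
    (∏ i ∈ s, G s i ^ a i).coeff 0 = (∏ i ∈ s.erase k, G (s.erase k) i ^ a i).coeff 0 := by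
  classical
  rw [prod_G_erase s a hk hak]
  set A : Set (Fin n →₀ ℤ) := {m | m k = 0} with hA
  set B : Set (Fin n →₀ ℤ) := {m | m k < 0 ∨ m = 0} with hB
  have h0A : (0 : Fin n →₀ ℤ) ∈ A := by simp [hA]
  have haddA : ∀ x ∈ A, ∀ y ∈ A, x + y ∈ A := by
    intro x hx y hy
    simp only [hA, Set.mem_setOf_eq, Finsupp.add_apply] at *
    omega
  have h0B : (0 : Fin n →₀ ℤ) ∈ B := by simp [hB]
  have haddB : ∀ x ∈ B, ∀ y ∈ B, x + y ∈ B := by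
    intro x hx y hy
    simp only [hB, Set.mem_setOf_eq, Finsupp.add_apply] at *
    rcases hx with hx | hx <;> rcases hy with hy | hy <;>
      simp_all [Finsupp.add_apply] <;> omega
  have hBB : ∀ x ∈ B, ∀ y ∈ B, x + y = 0 → x = 0 ∧ y = 0 := by
    intro x hx y hy hxy
    have h := DFunLike.congr_fun hxy k
    simp only [Finsupp.add_apply, Finsupp.coe_zero, Pi.zero_apply] at h
    simp only [hB, Set.mem_setOf_eq] at hx hy
    have hx0 : x = 0 := by
      rcases hx with hx | hx
      · rcases hy with hy | hy
        · exfalso; omega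
        · exfalso; rw [hy] at h; simp at h; omega
      · exact hx
    subst hx0
    simp only [zero_add] at hxy
    exact ⟨rfl, hxy⟩
  have hDsupp : ↑(∏ i ∈ s.erase k, G (s.erase k) i ^ a i).coeff.support ⊆ A := by
    refine support_prod_subset h0A haddA _ _ fun i hi => ?_
    refine support_pow_subset h0A haddA ?_ (a i)
    refine support_prod_subset h0A haddA _ _ fun j hj => ?_
    refine subset_trans (supp_factor i j) ?_
    intro m hm
    rcases hm with hm | hm
    · rw [hm]; exact h0A
    · rw [hm]
      have hik : i ≠ k := (Finset.mem_erase.mp hi).1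
      have hjk : j ≠ k := (Finset.mem_erase.mp ((Finset.erase_subset _ _) hj)).1
      simp [hA, Finsupp.add_apply, Finsupp.single_apply, hik, hjk]
  have hE : ↑(∏ i ∈ s.erase k, (1 - laurentX i 1 * laurentX k (-1)) ^ a i).coeff.support ⊆ B ∧
      (∏ i ∈ s.erase k, (1 - laurentX i 1 * laurentX k (-1)) ^ a i).coeff 0 = 1 := by
    have pmul : ∀ x y : Rn, (↑x.coeff.support ⊆ B ∧ x.coeff 0 = 1) → (↑y.coeff.support ⊆ B ∧ y.coeff 0 = 1) →
        (↑(x * y).coeff.support ⊆ B ∧ (x * y).coeff 0 = 1) := by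
      intro x y hx hy
      exact ⟨support_mul_subset haddB hx.1 hy.1,
        by rw [mul_apply_zero hBB hx.1 hy.1, hx.2, hy.2, one_mul]⟩
    have pone : (↑(1 : Rn).coeff.support ⊆ B ∧ (1 : Rn).coeff 0 = 1) :=
      ⟨support_one_subset' h0B, coeff_zero_one⟩
    refine Finset.prod_induction _ (fun x : Rn => ↑x.coeff.support ⊆ B ∧ x.coeff 0 = 1) pmul pone
      fun i hi => ?_
    have hik : i ≠ k := (Finset.mem_erase.mp hi).1
    have base : ↑((1 : Rn) - laurentX i 1 * laurentX k (-1)).coeff.support ⊆ B ∧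
        ((1 : Rn) - laurentX i 1 * laurentX k (-1)).coeff 0 = 1 := by
      constructor
      · refine subset_trans (supp_factor i k) ?_
        intro m hm
        rcases hm with hm | hm
        · rw [hm]; exact h0B
        · rw [hm]
          left
          simp [Finsupp.add_apply, Finsupp.single_apply, hik]
      · exact coeff_zero_factor i k hik
    induction a i with
    | zero => simpa using pone
    | succ m ih => rw [pow_succ]; exact pmul _ _ ih base
  have hAB : ∀ x ∈ A, ∀ y ∈ B, x + y = 0 → x = 0 ∧ y = 0 := by
    intro x hx y hy hxy
    have h := DFunLike.congr_fun hxy k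
    simp only [Finsupp.add_apply, Finsupp.coe_zero, Pi.zero_apply] at h
    simp only [hA, hB, Set.mem_setOf_eq] at hx hy
    have hy0 : y = 0 := by
      rcases hy with hy | hy
      · exfalso; omega
      · exact hy
    subst hy0
    simp only [add_zero] at hxy
    exact ⟨hxy, rfl⟩
  rw [mul_apply_zero hAB hDsupp hE.1, hE.2, mul_one]

lemma multinomial_erase (s : Finset (Fin n)) (a : Fin n → ℕ) {k : Fin n} (hk : k ∈ s)
    (hak : a k = 0) : Nat.multinomial s a = Nat.multinomial (s.erase k) a := by
  classical
  conv_lhs => rw [← Finset.insert_erase hk]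
  rw [Nat.multinomial_insert (Finset.notMem_erase k s), hak, Nat.choose_zero_right, one_mul]

lemma multinomial_pascal (s : Finset (Fin n)) (hs : s.Nonempty) (a : Fin n → ℕ)
    (ha : ∀ k ∈ s, 1 ≤ a k) :
    Nat.multinomial s a = ∑ k ∈ s, Nat.multinomial s (Function.update a k (a k - 1)) := by
  classical
  have hfacpos : 0 < ∏ i ∈ s, (a i).factorial :=
    Finset.prod_pos fun i _ => Nat.factorial_pos _
  refine Nat.eq_of_mul_eq_mul_left hfacpos ?_
  rw [Nat.multinomial_spec, Finset.mul_sum]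
  have hterm : ∀ k ∈ s,
      (∏ i ∈ s, (a i).factorial) * Nat.multinomial s (Function.update a k (a k - 1)) =
        a k * (∑ i ∈ s, a i - 1).factorial := by
    intro k hk
    have e1 : ∏ i ∈ s, (a i).factorial =
        (a k).factorial * ∏ i ∈ s.erase k, (a i).factorial :=
      (Finset.mul_prod_erase s _ hk).symm
    have e2 : ∏ i ∈ s, ((Function.update a k (a k - 1)) i).factorial =
        (a k - 1).factorial * ∏ i ∈ s.erase k, (a i).factorial := by
      rw [← Finset.mul_prod_erase s _ hk, Function.update_self]
      congr 1
      exact Finset.prod_congr rfl fun i hi => by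
        rw [Function.update_of_ne (Finset.mem_erase.mp hi).1]
    have e3 : (a k).factorial = a k * (a k - 1).factorial := by
      have h1 : a k = (a k - 1) + 1 := by have := ha k hk; omega
      conv_lhs => rw [h1]
      rw [Nat.factorial_succ, ← h1]
    have e4 : ∑ i ∈ s, (Function.update a k (a k - 1)) i = ∑ i ∈ s, a i - 1 := by
      rw [← Finset.add_sum_erase s _ hk, Function.update_self]
      have e5 : ∑ i ∈ s.erase k, (Function.update a k (a k - 1)) i =
          ∑ i ∈ s.erase k, a i :=
        Finset.sum_congr rfl fun i hi => by
          rw [Function.update_of_ne (Finset.mem_erase.mp hi).1]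
      have e6 : ∑ i ∈ s, a i = a k + ∑ i ∈ s.erase k, a i :=
        (Finset.add_sum_erase s _ hk).symm
      rw [e5, e6]
      have := ha k hk
      omega
    calc (∏ i ∈ s, (a i).factorial) * Nat.multinomial s (Function.update a k (a k - 1))
        = a k * ((∏ i ∈ s, ((Function.update a k (a k - 1)) i).factorial) *
            Nat.multinomial s (Function.update a k (a k - 1))) := by
          rw [e1, e2, e3]; ring
      _ = a k * (∑ i ∈ s, a i - 1).factorial := by
          rw [Nat.multinomial_spec, e4]
  rw [Finset.sum_congr rfl hterm, ← Finset.sum_mul]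
  obtain ⟨k0, hk0⟩ := hs
  have hN : 1 ≤ ∑ i ∈ s, a i :=
    le_trans (ha k0 hk0) (Finset.single_le_sum (fun i _ => Nat.zero_le _) hk0)
  have h1 : (∑ i ∈ s, a i) = (∑ i ∈ s, a i - 1) + 1 := by omega
  conv_lhs => rw [h1]
  rw [Nat.factorial_succ, ← h1]

lemma aux (M : ℕ) : ∀ (s : Finset (Fin n)) (a : Fin n → ℕ),
    (∑ i ∈ s, a i) + s.card ≤ M →
    (∏ i ∈ s, G s i ^ a i).coeff 0 = (Nat.multinomial s a : ℤ) := by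
  classical
  induction M with
  | zero =>
    intro s a h
    have hs : s = ∅ := Finset.card_eq_zero.mp (by omega)
    subst hs
    simp [coeff_zero_one]
  | succ M ih =>
    intro s a h
    rcases Finset.eq_empty_or_nonempty s with hs | hs
    · subst hs; simp [coeff_zero_one]
    by_cases hz : ∃ k ∈ s, a k = 0
    · obtain ⟨k, hk, hak⟩ := hz
      rw [ct_removal s a hk hak, multinomial_erase s a hk hak]
      refine ih (s.erase k) a ?_
      have h1 : ∑ i ∈ s.erase k, a i ≤ ∑ i ∈ s, a i :=
        Finset.sum_le_sum_of_subset (Finset.erase_subset _ _)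
      have h2 : (s.erase k).card = s.card - 1 := Finset.card_erase_of_mem hk
      have h3 : 1 ≤ s.card := Finset.card_pos.mpr hs
      omega
    · push_neg at hz
      have ha : ∀ k ∈ s, 1 ≤ a k := fun k hk => Nat.one_le_iff_ne_zero.mpr (hz k hk)
      rw [recursion s hs a ha, multinomial_pascal s hs a ha, AddMonoidAlgebra.coeff_sum, Finset.sum_apply']
      push_cast
      refine Finset.sum_congr rfl fun k hk => ?_
      refine ih s _ ?_
      have e4 : ∑ i ∈ s, (Function.update a k (a k - 1)) i = ∑ i ∈ s, a i - 1 := by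
        rw [← Finset.add_sum_erase s _ hk, Function.update_self]
        have e5 : ∑ i ∈ s.erase k, (Function.update a k (a k - 1)) i =
            ∑ i ∈ s.erase k, a i :=
          Finset.sum_congr rfl fun i hi => by
            rw [Function.update_of_ne (Finset.mem_erase.mp hi).1]
        have e6 : ∑ i ∈ s, a i = a k + ∑ i ∈ s.erase k, a i :=
          (Finset.add_sum_erase s _ hk).symm
        rw [e5, e6]
        have := ha k hk
        omega
      have hN : 1 ≤ ∑ i ∈ s, a i :=
        le_trans (ha k hk) (Finset.single_le_sum (fun i _ => Nat.zero_le _) hk)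
      omega

end Dyson

/-- Dyson's constant term identity: the constant term of
`∏_{i ≠ j} (1 - x_i/x_j)^{a_i}` equals the multinomial coefficient
`(a₁+⋯+aₙ)! / (a₁! ⋯ aₙ!)`. -/
theorem dyson_constant_term (n : ℕ) (hn : 1 ≤ n) (a : Fin n → ℕ) :
    (∏ p ∈ Finset.univ.filter (fun p : Fin n × Fin n => p.1 ≠ p.2),
        (1 - laurentX p.1 1 * laurentX p.2 (-1)) ^ a p.1).coeff 0 =
      (Nat.multinomial Finset.univ a : ℤ) := by
  classical
  have huniv : (Finset.univ.filter (fun p : Fin n × Fin n => p.1 ≠ p.2)) =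
      ((Finset.univ ×ˢ Finset.univ).filter (fun p : Fin n × Fin n => p.1 ≠ p.2)) := by
    rw [Finset.univ_product_univ]
  rw [huniv, Dyson.prod_offdiag]
  exact Dyson.aux ((∑ i, a i) + n) Finset.univ a (le_of_eq (by simp))
end
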